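/- Let n ≥ 3. For every permutation p of {1,…,n}, the entry p_{n−1} has two children in the minmax tree T^m_p if and only if the entry p_{n−2} is a leaf of T^m_p. -/

import Mathlib

/-!
The root of the minmax tree of a word with distinct letters is never its last letter: the
minimum and the maximum are different, so one of them comes earlier. Descending the right spine,
the last letter therefore always ends up as a leaf, and the last three letters
`p_{n-2} p_{n-1} p_n` stay together in a right subtree until its root is `p_{n-2}` or `p_{n-1}`.
If the root is `p_{n-2}`, its right subtree is the path `p_{n-1} → p_n`, so `p_{n-1}` has one
child and `p_{n-2}` is not a leaf. If the root is `p_{n-1}`, it has both children, and `p_{n-2}`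
is the last letter of its left subtree, hence a leaf.
-/

/-- Binary trees with natural-number labels, used to model minmax trees of
permutations. -/
inductive BTree where
  | nil : BTree
  | node : ℕ → BTree → BTree → BTree
deriving DecidableEq, Repr

namespace BTree

/-- The label of the root (if any). -/
def rootVal : BTree → Option ℕ
  | .nil => none
  | .node v _ _ => some v

/-- Whether the value `x` occurs as a label in the tree. -/
def memB : BTree → ℕ → Bool
  | .nil, _ => false
  | .node v l r, x => (x == v) || memB l x || memB r x

/-- The number of children of the (unique, for permutations) node labelled `x`. -/
def numChildren : BTree → ℕ → ℕ
  | .nil, _ => 0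
  | .node v l r, x =>
      if x = v then (if l = .nil then 0 else 1) + (if r = .nil then 0 else 1)
      else numChildren l x + numChildren r x

/-- `x` is a leaf of the tree: it occurs in the tree and has no children. -/
def IsLeaf (t : BTree) (x : ℕ) : Prop := t.memB x = true ∧ t.numChildren x = 0

instance (t : BTree) (x : ℕ) : Decidable (t.IsLeaf x) := by unfold IsLeaf; infer_instance

/-- `childB t x y = true` iff `x` is a child of `y` in `t`, i.e. `x` is the root of
the left or the right subtree hanging from `y`. -/
def childB : BTree → ℕ → ℕ → Bool
  | .nil, _, _ => false
  | .node v l r, x, y =>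
      ((y == v) && (l.rootVal == some x || r.rootVal == some x))
      || childB l x y || childB r x y

/-- `ancB t x y = true` iff `x` is a (strict) ancestor of `y` in `t`, i.e. `y` lies
in a subtree hanging from `x`. -/
def ancB : BTree → ℕ → ℕ → Bool
  | .nil, _, _ => false
  | .node v l r, x, y =>
      ((x == v) && (memB l y || memB r y)) || ancB l x y || ancB r x y

end BTree

/-- `x` is the leftmost-eligible extreme letter of `l`: the minimum or the maximum. -/
def isExtreme (l : List ℕ) (x : ℕ) : Bool :=
  (l.min? == some x) || (l.max? == some x)

/-- Fuelled construction of the minmax tree of a list of distinct naturals: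
split the list as `u ++ [m] ++ v` where `m` is the leftmost of the minimum and
maximum letters, put `m` at the root and recurse on `u` (left) and `v` (right). -/
def mmAux : ℕ → List ℕ → BTree
  | 0, _ => .nil
  | fuel+1, l =>
    if l.isEmpty then .nil
    else
      let k := l.findIdx (isExtreme l)
      .node (l.getD k 0) (mmAux fuel (l.take k)) (mmAux fuel (l.drop (k+1)))

/-- The minmax tree `T^m_p` of a word `l` (with distinct letters). -/
def minmaxTree (l : List ℕ) : BTree := mmAux l.length l

/-- The word `p_1 p_2 … p_n` on the letters `{1,…,n}` associated to a permutation
`p` of `Fin n`. -/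
def permList (n : ℕ) (p : Equiv.Perm (Fin n)) : List ℕ :=
  List.ofFn (fun i => (p i : ℕ) + 1)

/-- The `i`-th entry `p_i` (1-indexed) of the permutation `p`. -/
def entryAt (n : ℕ) (p : Equiv.Perm (Fin n)) (i : ℕ) : ℕ :=
  (permList n p).getD (i - 1) 0

theorem List.exists_eq_append_triple {α : Type*} {l : List α} (h : 3 ≤ l.length) :
    ∃ u a b c, l = u ++ [a, b, c] := by
  match hr : l.reverse, (List.length_reverse (as := l)).symm ▸ h with
  | c :: b :: a :: w, _ => exact ⟨w.reverse, a, b, c, by simpa using congrArg List.reverse hr⟩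

def minmaxRootIdx (l : List ℕ) : ℕ := l.findIdx (isExtreme l)

theorem minmaxRootIdx_lt_length {l : List ℕ} (h : l ≠ []) : minmaxRootIdx l < l.length := by
  obtain ⟨m, hm⟩ := Option.ne_none_iff_exists'.mp (mt List.min?_eq_none_iff.mp h)
  exact List.findIdx_lt_length_of_exists
    ⟨m, (List.min?_eq_some_iff.mp hm).1, by simp [isExtreme, hm]⟩

theorem minmaxRootIdx_append_singleton_lt {u : List ℕ} {c : ℕ} (hd : (u ++ [c]).Nodup)
    (hu : u ≠ []) : minmaxRootIdx (u ++ [c]) < u.length := by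
  set l := u ++ [c]
  obtain ⟨x, hx⟩ := List.exists_mem_of_ne_nil u hu
  have hxc : x ≠ c := (List.nodup_append.mp hd).2.2 x hx c (List.mem_singleton_self c)
  have hl : l ≠ [] := by simp [l]
  obtain ⟨m, hm⟩ := Option.ne_none_iff_exists'.mp (mt List.min?_eq_none_iff.mp hl)
  obtain ⟨M, hM⟩ := Option.ne_none_iff_exists'.mp (mt List.max?_eq_none_iff.mp hl)
  obtain ⟨hml, hmle⟩ := List.min?_eq_some_iff.mp hm
  obtain ⟨hMl, hMge⟩ := List.max?_eq_some_iff.mp hM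
  -- `c` cannot be both the minimum and the maximum, so an extreme letter lies in `u`
  have hext : ∃ y ∈ u, isExtreme l y = true := by
    by_cases hmc : m = c
    · have hMc : M ≠ c := fun hMc => hxc (le_antisymm (hMc ▸ hMge x (by simp [l, hx]))
        (hmc ▸ hmle x (by simp [l, hx])))
      exact ⟨M, by simpa [l, hMc] using hMl, by simp [isExtreme, hM]⟩
    · exact ⟨m, by simpa [l, hmc] using hml, by simp [isExtreme, hm]⟩
  have hlt := List.findIdx_lt_length_of_exists hext
  rw [minmaxRootIdx, List.findIdx_append, if_pos hlt]
  exact hlt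

theorem mmAux_eq_of_length_le {l : List ℕ} {f g : ℕ} (hf : l.length ≤ f)
    (hg : l.length ≤ g) :
    mmAux f l = mmAux g l := by
  induction f generalizing l g with
  | zero =>
    obtain rfl : l = [] := by simpa using hf
    cases g <;> rfl
  | succ f ih =>
    rcases eq_or_ne l [] with rfl | hl
    · cases g <;> simp [mmAux]
    obtain ⟨g, rfl⟩ : ∃ g', g = g' + 1 :=
      Nat.exists_eq_add_one.mpr (by have := List.length_pos_iff.mpr hl; omega)
    have hk := minmaxRootIdx_lt_length hl
    simp only [minmaxRootIdx] at hk
    simp only [mmAux, List.isEmpty_iff, hl, if_false]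
    congr 1 <;> apply ih <;> simp <;> omega

theorem minmaxTree_eq_node {l : List ℕ} (h : l ≠ []) :
    minmaxTree l = .node (l.getD (minmaxRootIdx l) 0) (minmaxTree (l.take (minmaxRootIdx l)))
      (minmaxTree (l.drop (minmaxRootIdx l + 1))) := by
  have hk := minmaxRootIdx_lt_length h
  obtain ⟨n, hn⟩ := Nat.exists_eq_add_one.mpr (List.length_pos_iff.mpr h)
  rw [minmaxTree, hn]
  simp only [mmAux, List.isEmpty_iff, h, if_false, minmaxRootIdx, minmaxTree]
  simp only [minmaxRootIdx] at hk
  congr 1 <;> apply mmAux_eq_of_length_le <;> simp <;> omega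

theorem minmaxTree_append_cons_eq_node {u v : List ℕ} {x : ℕ}
    (h : minmaxRootIdx (u ++ x :: v) = u.length) :
    minmaxTree (u ++ x :: v) = .node x (minmaxTree u) (minmaxTree v) := by
  rw [minmaxTree_eq_node (by simp), h]
  simp

theorem minmaxTree_ne_nil {l : List ℕ} (h : l ≠ []) : minmaxTree l ≠ .nil := by
  simp [minmaxTree_eq_node h]

theorem minmaxTree_singleton (c : ℕ) : minmaxTree [c] = .node c .nil .nil := by
  have h0 : minmaxRootIdx [c] = 0 := by
    simpa using minmaxRootIdx_lt_length (List.cons_ne_nil c [])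
  rw [minmaxTree_eq_node (List.cons_ne_nil c []), h0]
  rfl

theorem minmaxTree_pair (b c : ℕ) : minmaxTree [b, c] = .node b .nil (.node c .nil .nil) := by
  have h0 : minmaxRootIdx [b, c] = 0 := by
    rcases le_total b c with h | h <;> simp [minmaxRootIdx, isExtreme, List.findIdx_cons, h]
  rw [minmaxTree_eq_node (List.cons_ne_nil b [c]), h0]
  simp only [List.getD_cons_zero, List.take_zero, List.drop_succ_cons, List.drop_zero,
    minmaxTree_singleton]
  rfl

theorem memB_minmaxTree_eq_false {l : List ℕ} {x : ℕ} (hx : x ∉ l) :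
    (minmaxTree l).memB x = false := by
  rcases eq_or_ne l [] with rfl | hl
  · rfl
  have hk := minmaxRootIdx_lt_length hl
  rw [minmaxTree_eq_node hl, List.getD_eq_getElem _ _ hk]
  simp only [BTree.memB, Bool.or_eq_false_iff, beq_eq_false_iff_ne]
  exact ⟨⟨fun h => hx (h ▸ List.getElem_mem _),
    memB_minmaxTree_eq_false fun h => hx (List.mem_of_mem_take h)⟩,
    memB_minmaxTree_eq_false fun h => hx (List.mem_of_mem_drop h)⟩
termination_by l.length
decreasing_by all_goals simp only [List.length_take, List.length_drop]; omega

namespace BTree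

theorem numChildren_eq_zero_of_memB_eq_false {t : BTree} {x : ℕ} (h : t.memB x = false) :
    t.numChildren x = 0 := by
  induction t with
  | nil => rfl
  | node v l r ihl ihr =>
    simp only [memB, Bool.or_eq_false_iff, beq_eq_false_iff_ne] at h
    simp [numChildren, h.1.1, ihl h.1.2, ihr h.2]

theorem isLeaf_node_iff_right {v x : ℕ} {l r : BTree} (hv : x ≠ v) (hl : l.memB x = false) :
    (node v l r).IsLeaf x ↔ r.IsLeaf x := by
  simp [IsLeaf, memB, numChildren, hv, hl, numChildren_eq_zero_of_memB_eq_false hl]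

theorem isLeaf_node_iff_left {v x : ℕ} {l r : BTree} (hv : x ≠ v) (hr : r.memB x = false) :
    (node v l r).IsLeaf x ↔ l.IsLeaf x := by
  simp [IsLeaf, memB, numChildren, hv, hr, numChildren_eq_zero_of_memB_eq_false hr]

end BTree

section RootInPrefix

variable {u w : List ℕ} {x : ℕ}

theorem minmaxTree_append_eq_node (hk : minmaxRootIdx (u ++ w) < u.length) :
    minmaxTree (u ++ w) = .node u[minmaxRootIdx (u ++ w)]
      (minmaxTree (u.take (minmaxRootIdx (u ++ w))))
      (minmaxTree (u.drop (minmaxRootIdx (u ++ w) + 1) ++ w)) := by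
  rw [minmaxTree_eq_node
    (List.append_ne_nil_of_left_ne_nil (List.ne_nil_of_length_pos (by omega)) w),
    List.getD_append _ _ _ _ hk, List.getD_eq_getElem _ _ hk, List.take_append_of_le_length hk.le,
    List.drop_append_of_le_length hk]

theorem numChildren_minmaxTree_append (hk : minmaxRootIdx (u ++ w) < u.length) (hx : x ∉ u) :
    (minmaxTree (u ++ w)).numChildren x =
      (minmaxTree (u.drop (minmaxRootIdx (u ++ w) + 1) ++ w)).numChildren x := by
  have hv : x ≠ u[minmaxRootIdx (u ++ w)] := fun h => hx (h ▸ List.getElem_mem _)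
  rw [minmaxTree_append_eq_node hk, BTree.numChildren, if_neg hv,
    BTree.numChildren_eq_zero_of_memB_eq_false
      (memB_minmaxTree_eq_false fun h => hx (List.mem_of_mem_take h)), zero_add]

theorem isLeaf_minmaxTree_append_iff (hk : minmaxRootIdx (u ++ w) < u.length) (hx : x ∉ u) :
    (minmaxTree (u ++ w)).IsLeaf x ↔
      (minmaxTree (u.drop (minmaxRootIdx (u ++ w) + 1) ++ w)).IsLeaf x := by
  rw [minmaxTree_append_eq_node hk]
  exact BTree.isLeaf_node_iff_right (fun h => hx (h ▸ List.getElem_mem _))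
    (memB_minmaxTree_eq_false fun h => hx (List.mem_of_mem_take h))

end RootInPrefix

theorem isLeaf_minmaxTree_append_singleton {u : List ℕ} {c : ℕ} (hd : (u ++ [c]).Nodup) :
    (minmaxTree (u ++ [c])).IsLeaf c := by
  rcases eq_or_ne u [] with rfl | hu
  · simp [minmaxTree_singleton, BTree.IsLeaf, BTree.memB, BTree.numChildren]
  have hk := minmaxRootIdx_append_singleton_lt hd hu
  have hcu : c ∉ u := fun h => (List.nodup_append.mp hd).2.2 c h c (List.mem_singleton_self c) rfl
  rw [isLeaf_minmaxTree_append_iff hk hcu]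
  exact isLeaf_minmaxTree_append_singleton (hd.sublist ((List.drop_sublist _ _).append_right _))
termination_by u.length
decreasing_by simp only [List.length_drop]; omega

theorem numChildren_minmaxTree_eq_two_iff_isLeaf {u : List ℕ} {a b c : ℕ}
    (hd : (u ++ [a, b, c]).Nodup) :
    (minmaxTree (u ++ [a, b, c])).numChildren b = 2 ↔ (minmaxTree (u ++ [a, b, c])).IsLeaf a := by
  have hk : minmaxRootIdx (u ++ [a, b, c]) < u.length + 2 := by
    simpa using minmaxRootIdx_append_singleton_lt (u := u ++ [a, b]) (c := c) (by simpa using hd)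
      (by simp)
  obtain ⟨-, habc, hu⟩ := List.nodup_append.mp hd
  have hab : a ≠ b := fun h => by simp [h] at habc
  have hau : a ∉ u := fun h => hu a h a (by simp) rfl
  have hbu : b ∉ u := fun h => hu b h b (by simp) rfl
  rcases (by omega : minmaxRootIdx (u ++ [a, b, c]) < u.length ∨
      minmaxRootIdx (u ++ [a, b, c]) = u.length ∨ minmaxRootIdx (u ++ [a, b, c]) = u.length + 1)
    with hlt | heq | heq
  · rw [numChildren_minmaxTree_append hlt hbu, isLeaf_minmaxTree_append_iff hlt hau]
    exact numChildren_minmaxTree_eq_two_iff_isLeaf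
      (hd.sublist ((List.drop_sublist _ _).append_right _))
  · rw [minmaxTree_append_cons_eq_node heq]
    simp [minmaxTree_pair, BTree.IsLeaf, BTree.numChildren, Ne.symm hab,
      BTree.numChildren_eq_zero_of_memB_eq_false (memB_minmaxTree_eq_false hbu)]
  · have hac : a ≠ c := fun h => by simp [h] at habc
    have hleaf := isLeaf_minmaxTree_append_singleton
      (hd.sublist ((List.sublist_append_left [a] [b, c]).append_left u))
    rw [show u ++ [a, b, c] = u ++ [a] ++ b :: [c] by simp] at heq ⊢
    rw [minmaxTree_append_cons_eq_node (by simpa using heq),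
      BTree.isLeaf_node_iff_left hab (memB_minmaxTree_eq_false (by simpa using hac))]
    simp [BTree.numChildren, minmaxTree_ne_nil, hleaf]
termination_by u.length
decreasing_by simp only [List.length_drop]; omega

theorem permList_nodup (n : ℕ) (p : Equiv.Perm (Fin n)) : (permList n p).Nodup := by
  rw [permList, List.nodup_ofFn]
  intro i j hij
  exact p.injective (Fin.val_injective (Nat.add_right_cancel hij))

/-- For `n ≥ 3` and every permutation `p` of `{1,…,n}`, the entry
`p_{n-1}` has two children in the minmax tree if and only if `p_{n-2}` is a leaf. -/
theorem penultimate_two_children_iff (n : ℕ) (hn : 3 ≤ n) (p : Equiv.Perm (Fin n)) :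
    (minmaxTree (permList n p)).numChildren (entryAt n p (n - 1)) = 2 ↔
      (minmaxTree (permList n p)).IsLeaf (entryAt n p (n - 2)) := by
  obtain ⟨u, a, b, c, hp⟩ :=
    List.exists_eq_append_triple (l := permList n p) (by simpa [permList])
  have hlen : u.length + 3 = n := by simpa [permList] using (congrArg List.length hp).symm
  have hb : entryAt n p (n - 1) = b := by
    rw [entryAt, hp, ← hlen, List.getD_append_right _ _ _ _ (by omega)]; simp
  have ha : entryAt n p (n - 2) = a := by
    rw [entryAt, hp, ← hlen, List.getD_append_right _ _ _ _ (by omega)]; simp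
  rw [ha, hb, hp]
  exact numChildren_minmaxTree_eq_two_iff_isLeaf (hp ▸ permList_nodup n p)
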